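/- arXiv:1503.01854 — 2 statements merged into one kernel-verified Lean document; each statement's English description precedes it below -/
import Mathlib

section
/- Let n = 3 and let A be a symmetric positive definite 3×3 real matrix with entries A_{ij}, and set V(x) = xᵀAx. Then the choice model q(μ) = argmax_{x ∈ Δ₂} { μᵀx − V(x) } is substitutable (for all i ≠ j, all μ ∈ ℝ³, and all t > 0, q_j(μ + t·e_i) ≤ q_j(μ)) if and only if the three inequalities A₁₂ + A₃₃ ≥ A₁₃ + A₂₃, A₁₃ + A₂₂ ≥ A₁₂ + A₂₃, and A₂₃ + A₁₁ ≥ A₁₂ + A₁₃ all hold. -/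
/-! The optimal choice `q μ` is the unique maximizer of the strictly concave surplus
`μ ⬝ᵥ x - xᵀ A x` on the simplex, characterized by the first-order condition that the marginal
surplus `μₘ - 2 (A x)ₘ` is maximal on the support of `x`. At an interior point, raising `μₚ`
moves `x` along the direction `d` with `∑ d = 0` and `A d ∈ c eₚ + ℝ 𝟙`, `c > 0`; on the plane
`∑ d = 0` this is solved explicitly, and `dⱼ` has the sign of
`-(eⱼ - eₖ)ᵀ A (eₚ - eₖ) = A j k + A k p - A j p - A k k`, which gives necessity of the three
inequalities. Conversely, comparing the first-order conditions before and after the change of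
`μᵢ`, a rise of `xⱼ` is ruled out by positive definiteness or by one of these inequalities. -/

open scoped BigOperators
open MeasureTheory

noncomputable section

/-- The simplex Δ_{n-1} in ℝⁿ. -/
def choiceSimplex (n : ℕ) : Set (Fin n → ℝ) :=
  {x | (∀ i, 0 ≤ x i) ∧ ∑ i, x i = 1}

/-- A choice welfare function: monotone, translation invariant, convex. -/
def IsCWF {n : ℕ} (w : (Fin n → ℝ) → ℝ) : Prop :=
  (∀ μ₁ μ₂ : Fin n → ℝ, μ₂ ≤ μ₁ → w μ₂ ≤ w μ₁) ∧
  (∀ (μ : Fin n → ℝ) (t : ℝ), w (μ + fun _ => t) = w μ + t) ∧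
  ConvexOn ℝ Set.univ w

/-- The quadratic form V(x) = xᵀ A x. -/
def Vquad {n : ℕ} (A : Matrix (Fin n) (Fin n) ℝ) (x : Fin n → ℝ) : ℝ :=
  ∑ i, ∑ j, x i * A i j * x j

open Matrix Filter Topology

section General

variable {n : ℕ} {A : Matrix (Fin n) (Fin n) ℝ}

lemma Matrix.PosDef.isSymm (hA : A.PosDef) : A.IsSymm :=
  isHermitian_iff_isSymm.mp hA.isHermitian

lemma Vquad_eq_dotProduct_mulVec (A : Matrix (Fin n) (Fin n) ℝ) (x : Fin n → ℝ) :
    Vquad A x = x ⬝ᵥ A *ᵥ x := by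
  simp [Vquad, dotProduct, mulVec, Finset.mul_sum, mul_assoc]

lemma Vquad_pos (hA : A.PosDef) {x : Fin n → ℝ} (hx : x ≠ 0) : 0 < Vquad A x := by
  simpa [Vquad_eq_dotProduct_mulVec] using hA.dotProduct_mulVec_pos hx

lemma dotProduct_mulVec_comm (hA : A.IsSymm) (x y : Fin n → ℝ) :
    x ⬝ᵥ A *ᵥ y = y ⬝ᵥ A *ᵥ x := by
  rw [dotProduct_mulVec, ← hA, vecMul_transpose, dotProduct_comm, hA]

lemma Vquad_add (hA : A.IsSymm) (x y : Fin n → ℝ) :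
    Vquad A (x + y) = Vquad A x + 2 * (x ⬝ᵥ A *ᵥ y) + Vquad A y := by
  simp only [Vquad_eq_dotProduct_mulVec, mulVec_add, dotProduct_add, add_dotProduct,
    dotProduct_mulVec_comm hA y x]
  ring

lemma single_sub_single_ne_zero {j k : Fin n} (hjk : j ≠ k) :
    (Pi.single j 1 - Pi.single k 1 : Fin n → ℝ) ≠ 0 := fun h => by
  simpa [Pi.single_apply, hjk] using congrFun h j

lemma single_sub_single_dotProduct_mulVec (A : Matrix (Fin n) (Fin n) ℝ) (i j k : Fin n) :
    (Pi.single i 1 - Pi.single k 1) ⬝ᵥ A *ᵥ (Pi.single j 1 - Pi.single k 1) =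
      A i j - A i k - A k j + A k k := by
  simp only [mulVec_sub, mulVec_single_one, sub_dotProduct, single_dotProduct, one_mul,
    Pi.sub_apply, col_apply]
  ring

lemma eq_zero_of_forall_mul_mulVec_sub_nonpos (hA : A.PosDef) {d : Fin n → ℝ}
    (hd : ∑ m, d m = 0) (c : ℝ) (h : ∀ m, d m * ((A *ᵥ d) m - c) ≤ 0) : d = 0 := by
  by_contra hne
  have hpos : 0 < d ⬝ᵥ A *ᵥ d := by simpa using hA.dotProduct_mulVec_pos hne
  have hsum : d ⬝ᵥ A *ᵥ d = ∑ m, d m * ((A *ᵥ d) m - c) := by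
    simp [dotProduct, mul_sub, Finset.sum_sub_distrib, ← Finset.sum_mul, hd]
  linarith [Finset.sum_nonpos fun m (_ : m ∈ Finset.univ) => h m]

lemma add_smul_single_sub_single_mem {x : Fin n → ℝ} (hx : x ∈ choiceSimplex n)
    {l m : Fin n} {s : ℝ} (hs : 0 ≤ s) (hsm : s ≤ x m) :
    x + s • (Pi.single l 1 - Pi.single m 1) ∈ choiceSimplex n := by
  refine ⟨fun i => ?_, ?_⟩
  · simp only [Pi.add_apply, Pi.smul_apply, Pi.sub_apply, Pi.single_apply, smul_eq_mul]
    have := hx.1 i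
    split_ifs with hl hm hm <;> subst_vars <;> linarith
  · simp [Finset.sum_add_distrib, ← Finset.mul_sum, hx.2]

lemma exists_pos_add_smul_mem_choiceSimplex {x d : Fin n → ℝ} (hx : ∀ m, 0 < x m)
    (hxs : ∑ m, x m = 1) (hd : ∑ m, d m = 0) :
    ∃ ε : ℝ, 0 < ε ∧ x + ε • d ∈ choiceSimplex n := by
  have hnear : ∀ᶠ ε in 𝓝 (0 : ℝ), ∀ m, 0 < x m + ε * d m :=
    eventually_all.2 fun m => Tendsto.eventually_const_lt (hx m)
      ((continuous_const.add (continuous_id.mul continuous_const)).tendsto' 0 (x m) (by simp))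
  obtain ⟨ε, hpos, hε⟩ :=
    ((hnear.filter_mono nhdsWithin_le_nhds).and (self_mem_nhdsWithin (s := Set.Ioi 0))).exists
  refine ⟨ε, hε, fun m => (hpos m).le, ?_⟩
  simp [Finset.sum_add_distrib, ← Finset.mul_sum, hxs, hd]

def IsOptimalChoice (A : Matrix (Fin n) (Fin n) ℝ) (μ x : Fin n → ℝ) : Prop :=
  x ∈ choiceSimplex n ∧ IsMaxOn (fun z => μ ⬝ᵥ z - Vquad A z) (choiceSimplex n) x

lemma exists_isOptimalChoice [NeZero n] (A : Matrix (Fin n) (Fin n) ℝ) (μ : Fin n → ℝ) :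
    ∃ x, IsOptimalChoice A μ x :=
  (isCompact_stdSimplex ℝ (Fin n)).exists_isMaxOn ⟨_, single_mem_stdSimplex ℝ 0⟩
    (by unfold Vquad; fun_prop)

lemma surplus_eq_sub_Vquad_sub (hA : A.IsSymm) {μ x z : Fin n → ℝ} {c : ℝ}
    (hx : ∑ m, x m = 1) (hz : ∑ m, z m = 1) (hμ : ∀ m, μ m - 2 * (A *ᵥ x) m = c) :
    μ ⬝ᵥ z - Vquad A z = μ ⬝ᵥ x - Vquad A x - Vquad A (z - x) := by
  have hμ' : μ = fun m => 2 * (A *ᵥ x) m + c := funext fun m => by linarith [hμ m]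
  have hlin : μ ⬝ᵥ (z - x) = 2 * ((z - x) ⬝ᵥ A *ᵥ x) + c * (∑ m, z m - ∑ m, x m) := by
    simp only [hμ', dotProduct, Pi.sub_apply, Finset.mul_sum, ← Finset.sum_sub_distrib,
      ← Finset.sum_add_distrib]
    exact Finset.sum_congr rfl fun m _ => by ring
  rw [hx, hz, sub_self, mul_zero, add_zero, ← dotProduct_mulVec_comm hA, dotProduct_sub] at hlin
  have hV := Vquad_add hA x (z - x)
  rw [add_sub_cancel] at hV
  linarith

lemma IsOptimalChoice.eq_of_marginal_const (hA : A.PosDef) {μ x y : Fin n → ℝ} {c : ℝ}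
    (hy : IsOptimalChoice A μ y) (hx : x ∈ choiceSimplex n)
    (hμ : ∀ m, μ m - 2 * (A *ᵥ x) m = c) : y = x := by
  by_contra hne
  have hsurplus := surplus_eq_sub_Vquad_sub hA.isSymm hx.2 hy.1.2 hμ
  have hle := isMaxOn_iff.mp hy.2 x hx
  have := Vquad_pos hA (sub_ne_zero.mpr hne)
  linarith

/-- First-order condition: a good bought at the optimum has maximal marginal surplus. -/
lemma IsOptimalChoice.marginal_le (hA : A.IsSymm) {μ x : Fin n → ℝ}
    (hx : IsOptimalChoice A μ x) {m : Fin n} (hm : 0 < x m) (l : Fin n) :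
    μ l - 2 * (A *ᵥ x) l ≤ μ m - 2 * (A *ᵥ x) m := by
  set v : Fin n → ℝ := Pi.single l 1 - Pi.single m 1
  have hexpand : ∀ s : ℝ, μ ⬝ᵥ (x + s • v) - Vquad A (x + s • v) =
      μ ⬝ᵥ x - Vquad A x + s * (μ ⬝ᵥ v - 2 * (x ⬝ᵥ A *ᵥ v)) - s ^ 2 * Vquad A v := by
    intro s
    simp only [Vquad_add hA, Vquad_eq_dotProduct_mulVec, dotProduct_add, dotProduct_smul,
      mulVec_smul, smul_dotProduct, smul_eq_mul]
    ring
  have hslope : μ ⬝ᵥ v - 2 * (x ⬝ᵥ A *ᵥ v) ≤ 0 := by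
    refine ge_of_tendsto (x := 𝓝[>] 0) (f := fun s => s * Vquad A v)
      (((continuous_id.mul continuous_const).tendsto' 0 0 (by simp)).mono_left
        nhdsWithin_le_nhds) ?_
    filter_upwards [Ioc_mem_nhdsGT hm] with s ⟨hs0, hsm⟩
    have hle := isMaxOn_iff.mp hx.2 _ (add_smul_single_sub_single_mem (l := l) hx.1 hs0.le hsm)
    rw [hexpand] at hle
    nlinarith
  rw [dotProduct_mulVec_comm hA] at hslope
  simp only [v, dotProduct_sub, sub_dotProduct, dotProduct_single, single_dotProduct, mul_one,
    one_mul] at hslope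
  linarith

lemma mulVec_sub_le_of_isOptimalChoice (hA : A.IsSymm) {μ x x' : Fin n → ℝ} {t : ℝ}
    (ht : 0 ≤ t) {i j m : Fin n} (hij : i ≠ j) (hx : IsOptimalChoice A μ x)
    (hx' : IsOptimalChoice A (μ + t • Pi.single i 1) x') (hm : 0 < x m) (hj : 0 < x' j) :
    (A *ᵥ (x' - x)) j ≤ (A *ᵥ (x' - x)) m := by
  have h := hx.marginal_le hA hm j
  have h' := hx'.marginal_le hA hj m
  have hti : 0 ≤ t * (Pi.single i 1 : Fin n → ℝ) m :=
    mul_nonneg ht (by rw [Pi.single_apply]; split_ifs <;> norm_num)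
  simp only [Pi.add_apply, Pi.smul_apply, smul_eq_mul, Pi.single_eq_of_ne hij.symm, mul_zero,
    add_zero] at h'
  simp only [mulVec_sub, Pi.sub_apply]
  linarith

/-- Both the barycentre `x₀` and `x₀ + ε d` have constant marginal surplus, at `2 A x₀` and at
`2 A x₀ + 2 ε c eₚ` respectively, so they are the optimal choices there. -/
lemma exists_choice_lt_of_mulVec_eq (hA : A.PosDef) {q : (Fin n → ℝ) → Fin n → ℝ}
    (hq : ∀ μ, IsOptimalChoice A μ (q μ)) {p j : Fin n} {d : Fin n → ℝ} {c β : ℝ}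
    (hd : ∑ m, d m = 0) (hc : 0 < c)
    (hAd : ∀ m, (A *ᵥ d) m = c * (Pi.single p 1 : Fin n → ℝ) m + β) (hdj : 0 < d j) :
    ∃ (μ : Fin n → ℝ) (t : ℝ), 0 < t ∧ q μ j < q (μ + t • Pi.single p 1) j := by
  have hn : (0 : ℝ) < n := by exact_mod_cast j.pos
  set x₀ : Fin n → ℝ := fun _ => (n : ℝ)⁻¹
  have hx₀ : ∀ m, 0 < x₀ m := fun _ => inv_pos.2 hn
  have hx₀s : ∑ m, x₀ m = 1 := by simp [x₀, hn.ne']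
  obtain ⟨ε, hε, hmem⟩ := exists_pos_add_smul_mem_choiceSimplex hx₀ hx₀s hd
  refine ⟨fun m => 2 * (A *ᵥ x₀) m, 2 * ε * c, by positivity, ?_⟩
  have h₀ : q (fun m => 2 * (A *ᵥ x₀) m) = x₀ :=
    (hq _).eq_of_marginal_const hA ⟨fun m => (hx₀ m).le, hx₀s⟩ (c := 0) fun m => by ring
  have h₁ : q ((fun m => 2 * (A *ᵥ x₀) m) + (2 * ε * c) • Pi.single p 1) = x₀ + ε • d :=
    (hq _).eq_of_marginal_const hA hmem (c := -2 * ε * β) fun m => by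
      simp only [Pi.add_apply, Pi.smul_apply, smul_eq_mul, mulVec_add, mulVec_smul, hAd]
      ring
  rw [h₀, h₁]
  simpa using mul_pos hε hdj

end General

section Three

variable {A : Matrix (Fin 3) (Fin 3) ℝ}

lemma Fin.eq_or_eq_or_eq_of_ne {j l m : Fin 3} (hjl : j ≠ l) (hjm : j ≠ m) (hlm : l ≠ m)
    (a : Fin 3) : a = j ∨ a = l ∨ a = m := by
  revert j l m a
  decide

lemma Fin.sum_univ_three_of_ne {M : Type*} [AddCommMonoid M] {j l m : Fin 3} (hjl : j ≠ l)
    (hjm : j ≠ m) (hlm : l ≠ m) (f : Fin 3 → M) : ∑ a, f a = f j + f l + f m := by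
  have huniv : ({j, l, m} : Finset (Fin 3)) = Finset.univ :=
    Finset.eq_univ_of_card _ (Finset.card_eq_three.2 ⟨j, l, m, hjl, hjm, hlm, rfl⟩)
  rw [← huniv, Finset.sum_insert (by simp [hjl, hjm]), Finset.sum_pair hlm, add_assoc]

lemma eq_smul_add_smul_of_sum_eq_zero {d : Fin 3 → ℝ} (hd : ∑ a, d a = 0) {j l m : Fin 3}
    (hjl : j ≠ l) (hjm : j ≠ m) (hlm : l ≠ m) :
    d = d j • (Pi.single j 1 - Pi.single m 1) + d l • (Pi.single l 1 - Pi.single m 1) := by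
  rw [Fin.sum_univ_three_of_ne hjl hjm hlm] at hd
  funext a
  rcases Fin.eq_or_eq_or_eq_of_ne hjl hjm hlm a with h | h | h <;>
    simp [h, hjl, hjm, hlm, hjl.symm, hjm.symm, hlm.symm]
  linarith

/-- With `B(a, b) = a ⬝ᵥ A *ᵥ b`, `u = eⱼ - eₖ` and `w = eₚ - eₖ`, the solution is
`d = B(u,u) w - B(u,w) u`: then `B(u,d) = 0`, and `c = B(w,d) > 0` since
`B(d,d) = B(u,u) B(w,d)`. -/
lemma exists_mulVec_eq_of_cross_lt (hA : A.PosDef) {p j k : Fin 3} (hjp : j ≠ p)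
    (hjk : j ≠ k) (hpk : p ≠ k) (hcross : A j p + A k k < A j k + A k p) :
    ∃ (d : Fin 3 → ℝ) (c β : ℝ), ∑ m, d m = 0 ∧ 0 < c ∧
      (∀ m, (A *ᵥ d) m = c * (Pi.single p 1 : Fin 3 → ℝ) m + β) ∧ 0 < d j := by
  set u : Fin 3 → ℝ := Pi.single j 1 - Pi.single k 1
  set w : Fin 3 → ℝ := Pi.single p 1 - Pi.single k 1
  set d : Fin 3 → ℝ := (u ⬝ᵥ A *ᵥ u) • w - (u ⬝ᵥ A *ᵥ w) • u
  have huw : u ⬝ᵥ A *ᵥ w < 0 := by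
    rw [single_sub_single_dotProduct_mulVec]
    linarith
  have hu : 0 < u ⬝ᵥ A *ᵥ u := by
    simpa only [star_trivial] using hA.dotProduct_mulVec_pos (single_sub_single_ne_zero hjk)
  have hud : u ⬝ᵥ A *ᵥ d = 0 := by
    simp only [d, mulVec_sub, mulVec_smul, dotProduct_sub, dotProduct_smul, smul_eq_mul]
    ring
  have hdd : d ⬝ᵥ A *ᵥ d = (u ⬝ᵥ A *ᵥ u) * (w ⬝ᵥ A *ᵥ d) := by
    simp only [d, sub_dotProduct, smul_dotProduct, hud, smul_eq_mul, mul_zero, sub_zero]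
  have hdj : d j = -(u ⬝ᵥ A *ᵥ w) := by simp [d, u, w, hjp, hjk]
  have hd0 : d ≠ 0 := fun h => by simpa [hdj, huw.ne] using congrFun h j
  have hc : 0 < w ⬝ᵥ A *ᵥ d := by
    have := hA.dotProduct_mulVec_pos hd0
    simp only [star_trivial, hdd] at this
    exact pos_of_mul_pos_right this hu.le
  refine ⟨d, w ⬝ᵥ A *ᵥ d, (A *ᵥ d) k, ?_, hc, fun m => ?_, by linarith⟩
  · simp [d, u, w, Finset.sum_sub_distrib, ← Finset.mul_sum]
  · rcases Fin.eq_or_eq_or_eq_of_ne hjp hjk hpk m with h | h | h <;> rw [h]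
    · have : (A *ᵥ d) j - (A *ᵥ d) k = 0 := by simpa [u, sub_dotProduct] using hud
      simp [hjp]
      linarith
    · simp [w, sub_dotProduct]
    · simp [hpk.symm]

lemma cross_le_of_substitutable (hA : A.PosDef) {q : (Fin 3 → ℝ) → Fin 3 → ℝ}
    (hq : ∀ μ, IsOptimalChoice A μ (q μ)) {p j k : Fin 3} (hjp : j ≠ p) (hjk : j ≠ k)
    (hpk : p ≠ k)
    (hsub : ∀ (μ : Fin 3 → ℝ) (t : ℝ), 0 < t → q (μ + t • Pi.single p 1) j ≤ q μ j) :
    A j k + A k p ≤ A j p + A k k := by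
  by_contra! hcross
  obtain ⟨d, c, β, hd, hc, hAd, hdj⟩ := exists_mulVec_eq_of_cross_lt hA hjp hjk hpk hcross
  obtain ⟨μ, t, ht, hlt⟩ := exists_choice_lt_of_mulVec_eq hA hq hd hc hAd hdj
  exact (hsub μ t ht).not_gt hlt

lemma mulVec_lt_of_cross_le (hA : A.PosDef) {d : Fin 3 → ℝ} (hd : ∑ a, d a = 0)
    {j l m : Fin 3} (hjl : j ≠ l) (hjm : j ≠ m) (hlm : l ≠ m) (hdj : 0 < d j) (hdl : 0 ≤ d l)
    (hcross : A j m + A m l ≤ A j l + A m m) :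
    (A *ᵥ d) m < (A *ᵥ d) j := by
  set u : Fin 3 → ℝ := Pi.single j 1 - Pi.single m 1
  set w : Fin 3 → ℝ := Pi.single l 1 - Pi.single m 1
  have hu : 0 < u ⬝ᵥ A *ᵥ u := by
    simpa only [star_trivial] using hA.dotProduct_mulVec_pos (single_sub_single_ne_zero hjm)
  have huw : 0 ≤ u ⬝ᵥ A *ᵥ w := by
    rw [single_sub_single_dotProduct_mulVec]
    linarith
  have hud : u ⬝ᵥ A *ᵥ d = d j * (u ⬝ᵥ A *ᵥ u) + d l * (u ⬝ᵥ A *ᵥ w) := by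
    conv_lhs => rw [eq_smul_add_smul_of_sum_eq_zero hd hjl hjm hlm]
    simp only [mulVec_add, mulVec_smul, dotProduct_add, dotProduct_smul, smul_eq_mul, u, w]
  have hud' : u ⬝ᵥ A *ᵥ d = (A *ᵥ d) j - (A *ᵥ d) m := by simp [u, sub_dotProduct]
  nlinarith [mul_pos hdj hu, mul_nonneg hdl huw]

/-- With `d = x' - x`, the first-order conditions give `(A d)ⱼ ≤ (A d)ₘ` wherever `dₘ < 0`. If
both other coordinates of `d` are negative this forces `dᵀ A d ≤ 0`; otherwise it contradicts
the cross inequality based at the negative one. -/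
lemma choice_le_of_cross_le (hA : A.PosDef) {μ x x' : Fin 3 → ℝ} {t : ℝ} (ht : 0 ≤ t)
    {i j k : Fin 3} (hij : i ≠ j) (hik : i ≠ k) (hjk : j ≠ k) (hx : IsOptimalChoice A μ x)
    (hx' : IsOptimalChoice A (μ + t • Pi.single i 1) x')
    (hk : A j k + A k i ≤ A j i + A k k) (hi : A j i + A i k ≤ A j k + A i i) :
    x' j ≤ x j := by
  by_contra! hlt
  set d := x' - x
  have hd : ∑ a, d a = 0 := by simp [d, Finset.sum_sub_distrib, hx.1.2, hx'.1.2]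
  have hdj : 0 < d j := sub_pos.2 hlt
  have hfoc {m : Fin 3} (hm : d m < 0) : (A *ᵥ d) j ≤ (A *ᵥ d) m :=
    mulVec_sub_le_of_isOptimalChoice hA.isSymm ht hij hx hx'
      ((hx'.1.1 m).trans_lt (sub_neg.1 hm)) ((hx.1.1 j).trans_lt hlt)
  rcases lt_or_ge (d i) 0 with hdi | hdi
  · rcases lt_or_ge (d k) 0 with hdk | hdk
    · have hzero := eq_zero_of_forall_mul_mulVec_sub_nonpos hA hd ((A *ᵥ d) j) fun m => by
        rcases Fin.eq_or_eq_or_eq_of_ne hij hik hjk m with h | h | h <;> rw [h]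
        · exact mul_nonpos_of_nonpos_of_nonneg hdi.le (sub_nonneg.2 (hfoc hdi))
        · simp
        · exact mul_nonpos_of_nonpos_of_nonneg hdk.le (sub_nonneg.2 (hfoc hdk))
      simp [hzero] at hdj
    · exact (hfoc hdi).not_gt (mulVec_lt_of_cross_le hA hd hjk hij.symm hik.symm hdj hdk hi)
  · have hdk : d k < 0 := by
      linarith [Fin.sum_univ_three_of_ne hij hik hjk d]
    exact (hfoc hdk).not_gt (mulVec_lt_of_cross_le hA hd hij.symm hjk hik hdj hdi hk)

lemma cross_le_iff_forall_ne (hA : A.IsSymm) :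
    (A 0 2 + A 1 2 ≤ A 0 1 + A 2 2 ∧ A 0 1 + A 1 2 ≤ A 0 2 + A 1 1 ∧
      A 0 1 + A 0 2 ≤ A 1 2 + A 0 0) ↔
      ∀ a b c : Fin 3, a ≠ b → a ≠ c → b ≠ c → A a c + A c b ≤ A a b + A c c := by
  have h₁ := hA.apply 0 1
  have h₂ := hA.apply 0 2
  have h₃ := hA.apply 1 2
  constructor
  · rintro ⟨h₀, h₁, h₂⟩ a b c hab hac hbc
    fin_cases a <;> fin_cases b <;> fin_cases c <;> simp_all <;> linarith
  · intro h
    exact ⟨by linarith [h 0 1 2 (by decide) (by decide) (by decide)],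
      by linarith [h 0 2 1 (by decide) (by decide) (by decide)],
      by linarith [h 1 2 0 (by decide) (by decide) (by decide)]⟩

end Three

theorem stmt_18_general (A : Matrix (Fin 3) (Fin 3) ℝ) (hpos : A.PosDef) :
    (∃ q : (Fin 3 → ℝ) → Fin 3 → ℝ, ∀ μ : Fin 3 → ℝ, q μ ∈ choiceSimplex 3 ∧
      ∀ x ∈ choiceSimplex 3,
        ∑ i, μ i * x i - Vquad A x ≤ ∑ i, μ i * q μ i - Vquad A (q μ)) ∧
    (∀ q : (Fin 3 → ℝ) → Fin 3 → ℝ,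
      (∀ μ : Fin 3 → ℝ, q μ ∈ choiceSimplex 3 ∧
        ∀ x ∈ choiceSimplex 3,
          ∑ i, μ i * x i - Vquad A x ≤ ∑ i, μ i * q μ i - Vquad A (q μ)) →
      ((∀ i j : Fin 3, i ≠ j → ∀ (μ : Fin 3 → ℝ) (t : ℝ), 0 < t →
          q (μ + t • (Pi.single i 1 : Fin 3 → ℝ)) j ≤ q μ j) ↔
        (A 0 2 + A 1 2 ≤ A 0 1 + A 2 2 ∧
         A 0 1 + A 1 2 ≤ A 0 2 + A 1 1 ∧
         A 0 1 + A 0 2 ≤ A 1 2 + A 0 0))) := by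
  choose q hq using exists_isOptimalChoice A
  refine ⟨⟨q, hq⟩, fun q hq => ?_⟩
  rw [cross_le_iff_forall_ne hpos.isSymm]
  constructor
  · intro hsub a b c hab hac hbc
    exact cross_le_of_substitutable hpos hq hab hac hbc (hsub b a hab.symm)
  · intro hcross i j hij μ t ht
    obtain ⟨k, hik, hjk⟩ : ∃ k, i ≠ k ∧ j ≠ k := by
      revert i j
      decide
    exact choice_le_of_cross_le hpos ht.le hij hik hjk (hq μ) (hq _)
      (hcross j i k hij.symm hjk hik) (hcross j k i hjk hij.symm hik.symm)

theorem stmt_18 (A : Matrix (Fin 3) (Fin 3) ℝ) (hsymm : A.IsSymm) (hpos : A.PosDef) :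
    (∃ q : (Fin 3 → ℝ) → Fin 3 → ℝ, ∀ μ : Fin 3 → ℝ, q μ ∈ choiceSimplex 3 ∧
      ∀ x ∈ choiceSimplex 3,
        ∑ i, μ i * x i - Vquad A x ≤ ∑ i, μ i * q μ i - Vquad A (q μ)) ∧
    (∀ q : (Fin 3 → ℝ) → Fin 3 → ℝ,
      (∀ μ : Fin 3 → ℝ, q μ ∈ choiceSimplex 3 ∧
        ∀ x ∈ choiceSimplex 3,
          ∑ i, μ i * x i - Vquad A x ≤ ∑ i, μ i * q μ i - Vquad A (q μ)) →
      ((∀ i j : Fin 3, i ≠ j → ∀ (μ : Fin 3 → ℝ) (t : ℝ), 0 < t →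
          q (μ + t • (Pi.single i 1 : Fin 3 → ℝ)) j ≤ q μ j) ↔
        (A 0 2 + A 1 2 ≤ A 0 1 + A 2 2 ∧
         A 0 1 + A 1 2 ≤ A 0 2 + A 1 1 ∧
         A 0 1 + A 0 2 ≤ A 1 2 + A 0 0))) :=
  stmt_18_general A hpos
end
end

section
/- Define w : ℝ³ → ℝ by w(μ₁, μ₂, μ₃) = log(e^{μ₁} + e^{μ₂} + e^{μ₃} + e^{(μ₁+μ₂)/2}). Then w is a differentiable choice welfare function (monotone, translation invariant, convex, differentiable), and its mixed partial derivative satisfies ∂²w/∂μ₁∂μ₂ = e^{(μ₁+μ₂)/2}(−e^{μ₁} − e^{μ₂} + e^{μ₃} − 4e^{(μ₁+μ₂)/2}) / (4(e^{μ₁} + e^{μ₂} + e^{μ₃} + e^{(μ₁+μ₂)/2})²); in particular, ∂²w/∂μ₁∂μ₂ ≥ 0 if and only if e^{μ₃} ≥ 4e^{(μ₁+μ₂)/2} + e^{μ₁} + e^{μ₂}, so w is not submodular and the choice model q(μ) = ∇w(μ) is not substitutable. -/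
open scoped BigOperators
open MeasureTheory

noncomputable section

/-- The gradient of w at μ, whose i-th component is the partial derivative ∂w/∂μᵢ. -/
def grad {n : ℕ} (w : (Fin n → ℝ) → ℝ) (μ : Fin n → ℝ) : Fin n → ℝ :=
  fun i => fderiv ℝ w μ (Pi.single i 1)

/-!
`w` is the log-sum-exp `μ ↦ log ∑ₖ exp (ℓₖ μ)` of the four linear forms `μ₀, μ₁, μ₂` and
`(μ₀ + μ₁) / 2`. Each form is monotone and sends the all-ones vector to `1`, which gives
monotonicity and translation invariance; convexity is Hölder's inequality
`∑ exp (a sₖ + b tₖ) ≤ (∑ exp sₖ) ^ a * (∑ exp tₖ) ^ b`, obtained termwise from weighted AM-GM.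
The Hessian of a log-sum-exp is the covariance of the forms under the softmax weights
`exp (ℓₖ μ) / ∑ exp (ℓₖ μ)`; the midpoint form is the only one involving both `μ₀` and `μ₁`, so
the mixed partial becomes positive once `exp μ₂` dominates. At such points the submodular
inequality fails and the choice probability of alternative `1` increases with `μ₀`.
-/

open Real Finset

theorem Real.exp_add_mul_le {a b : ℝ} (ha : 0 ≤ a) (hb : 0 ≤ b) (hab : a + b = 1)
    {A B : ℝ} (hA : 0 < A) (hB : 0 < B) (s t : ℝ) :
    exp (a * s + b * t) ≤ A ^ a * B ^ b * (a * (exp s / A) + b * (exp t / B)) := by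
  calc exp (a * s + b * t) = A ^ a * B ^ b * ((exp s / A) ^ a * (exp t / B) ^ b) := by
        rw [div_rpow (exp_pos s).le hA.le, div_rpow (exp_pos t).le hB.le, ← exp_mul, ← exp_mul,
          exp_add]
        field_simp
    _ ≤ A ^ a * B ^ b * (a * (exp s / A) + b * (exp t / B)) := by
        gcongr
        exact geom_mean_le_arith_mean2_weighted ha hb (by positivity) (by positivity) hab

theorem Real.sum_exp_add_mul_le {ι : Type*} (u : Finset ι) (hu : u.Nonempty) {a b : ℝ}
    (ha : 0 ≤ a) (hb : 0 ≤ b) (hab : a + b = 1) (s t : ι → ℝ) :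
    ∑ k ∈ u, exp (a * s k + b * t k) ≤ (∑ k ∈ u, exp (s k)) ^ a * (∑ k ∈ u, exp (t k)) ^ b := by
  set A := ∑ k ∈ u, exp (s k)
  set B := ∑ k ∈ u, exp (t k)
  have hA : 0 < A := sum_pos (fun k _ => exp_pos (s k)) hu
  have hB : 0 < B := sum_pos (fun k _ => exp_pos (t k)) hu
  calc ∑ k ∈ u, exp (a * s k + b * t k)
      ≤ ∑ k ∈ u, A ^ a * B ^ b * (a * (exp (s k) / A) + b * (exp (t k) / B)) :=
        sum_le_sum fun k _ => exp_add_mul_le ha hb hab hA hB (s k) (t k)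
    _ = A ^ a * B ^ b := by
        rw [← mul_sum, sum_add_distrib, ← mul_sum, ← mul_sum, ← sum_div, ← sum_div,
          div_self hA.ne', div_self hB.ne', mul_one, mul_one, hab, mul_one]

theorem Real.exp_two_mul_log_two : exp (2 * log 2) = 2 ^ 2 := by
  simpa [exp_log] using exp_nat_mul (log 2) 2

theorem Real.exp_four_mul_log_two : exp (4 * log 2) = 2 ^ 4 := by
  simpa [exp_log] using exp_nat_mul (log 2) 4

def logSumExp {ι E : Type*} [Fintype ι] [NormedAddCommGroup E] [NormedSpace ℝ E]
    (ℓ : ι → E →L[ℝ] ℝ) (μ : E) : ℝ :=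
  log (∑ k, exp (ℓ k μ))

namespace logSumExp

variable {ι E : Type*} [Fintype ι] [NormedAddCommGroup E] [NormedSpace ℝ E]
  (ℓ : ι → E →L[ℝ] ℝ)

theorem hasFDerivAt_sum_exp (μ : E) :
    HasFDerivAt (fun ν => ∑ k, exp (ℓ k ν)) (∑ k, exp (ℓ k μ) • ℓ k) μ :=
  HasFDerivAt.fun_sum fun k _ => (ℓ k).hasFDerivAt.exp

variable [Nonempty ι]

theorem sum_exp_pos (μ : E) : 0 < ∑ k, exp (ℓ k μ) :=
  sum_pos (fun _ _ => exp_pos _) univ_nonempty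

theorem convexOn : ConvexOn ℝ Set.univ (logSumExp ℓ) := by
  refine ⟨convex_univ, fun x _ y _ a b ha hb hab => ?_⟩
  have hHolder := sum_exp_add_mul_le univ univ_nonempty ha hb hab (ℓ · x) (ℓ · y)
  simp only [logSumExp, map_add, map_smul, smul_eq_mul]
  calc log (∑ k, exp (a * ℓ k x + b * ℓ k y))
      ≤ log ((∑ k, exp (ℓ k x)) ^ a * (∑ k, exp (ℓ k y)) ^ b) :=
        log_le_log (sum_pos (fun _ _ => exp_pos _) univ_nonempty) hHolder
    _ = a * log (∑ k, exp (ℓ k x)) + b * log (∑ k, exp (ℓ k y)) := by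
        rw [log_mul (by positivity) (by positivity), log_rpow (sum_exp_pos ℓ x),
          log_rpow (sum_exp_pos ℓ y)]

theorem monotone [Preorder E] (hℓ : ∀ k, Monotone (ℓ k)) : Monotone (logSumExp ℓ) :=
  fun _ _ h => log_le_log (sum_exp_pos ℓ _) <|
    sum_le_sum fun k _ => exp_le_exp.mpr (hℓ k h)

theorem apply_add_smul {e : E} (he : ∀ k, ℓ k e = 1) (μ : E) (t : ℝ) :
    logSumExp ℓ (μ + t • e) = logSumExp ℓ μ + t := by
  simp only [logSumExp, map_add, map_smul, he, smul_eq_mul, mul_one, exp_add, ← sum_mul]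
  rw [log_mul (sum_exp_pos ℓ μ).ne' (exp_pos t).ne', log_exp]

theorem hasFDerivAt (μ : E) :
    HasFDerivAt (logSumExp ℓ) ((∑ k, exp (ℓ k μ))⁻¹ • ∑ k, exp (ℓ k μ) • ℓ k) μ :=
  (hasFDerivAt_sum_exp ℓ μ).log (sum_exp_pos ℓ μ).ne'

theorem differentiable : Differentiable ℝ (logSumExp ℓ) :=
  fun μ => (hasFDerivAt ℓ μ).differentiableAt

theorem fderiv_apply (μ v : E) :
    fderiv ℝ (logSumExp ℓ) μ v = (∑ k, exp (ℓ k μ) * ℓ k v) / ∑ k, exp (ℓ k μ) := by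
  simp [(hasFDerivAt ℓ μ).fderiv, div_eq_inv_mul]

theorem fderiv_fderiv_apply (μ u v : E) :
    fderiv ℝ (fun ν => fderiv ℝ (logSumExp ℓ) ν v) μ u =
      (∑ k, exp (ℓ k μ) * ℓ k u * ℓ k v) / ∑ k, exp (ℓ k μ) -
        (∑ k, exp (ℓ k μ) * ℓ k u) * (∑ k, exp (ℓ k μ) * ℓ k v) / (∑ k, exp (ℓ k μ)) ^ 2 := by
  have hN : HasFDerivAt (fun ν => ∑ k, exp (ℓ k ν) * ℓ k v)
      (∑ k, ℓ k v • exp (ℓ k μ) • ℓ k) μ :=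
    HasFDerivAt.fun_sum fun k _ => (ℓ k).hasFDerivAt.exp.mul_const (ℓ k v)
  have hinv : HasFDerivAt (fun ν => (∑ k, exp (ℓ k ν))⁻¹)
      (-((∑ k, exp (ℓ k μ)) ^ 2)⁻¹ • ∑ k, exp (ℓ k μ) • ℓ k) μ :=
    (hasDerivAt_inv (sum_exp_pos ℓ μ).ne').comp_hasFDerivAt μ (hasFDerivAt_sum_exp ℓ μ)
  simp only [fderiv_apply, div_eq_mul_inv]
  rw [(hN.fun_mul hinv).fderiv]
  simp only [add_apply, smul_apply, _root_.sum_apply, smul_eq_mul]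
  rw [(sum_congr rfl fun k _ => by ring : ∑ k, ℓ k v * (exp (ℓ k μ) * ℓ k u) =
    ∑ k, exp (ℓ k μ) * ℓ k u * ℓ k v)]
  ring

end logSumExp

def coordsAndMidpoint : Fin 4 → (Fin 3 → ℝ) →L[ℝ] ℝ :=
  let coord (i : Fin 3) : (Fin 3 → ℝ) →L[ℝ] ℝ := ContinuousLinearMap.proj i
  ![coord 0, coord 1, coord 2, (2 : ℝ)⁻¹ • (coord 0 + coord 1)]

namespace coordsAndMidpoint

@[simp] theorem apply_zero (μ : Fin 3 → ℝ) : coordsAndMidpoint 0 μ = μ 0 := rfl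
@[simp] theorem apply_one (μ : Fin 3 → ℝ) : coordsAndMidpoint 1 μ = μ 1 := rfl
@[simp] theorem apply_two (μ : Fin 3 → ℝ) : coordsAndMidpoint 2 μ = μ 2 := rfl
@[simp] theorem apply_three (μ : Fin 3 → ℝ) : coordsAndMidpoint 3 μ = (μ 0 + μ 1) / 2 := by
  simp [coordsAndMidpoint, div_eq_inv_mul, mul_add]

theorem logSumExp_apply (μ : Fin 3 → ℝ) :
    logSumExp coordsAndMidpoint μ =
      log (exp (μ 0) + exp (μ 1) + exp (μ 2) + exp ((μ 0 + μ 1) / 2)) := by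
  simp [logSumExp, Fin.sum_univ_four]

theorem monotone (k : Fin 4) : Monotone (coordsAndMidpoint k) := by
  intro μ ν h
  fin_cases k <;> simp <;> linarith [h 0, h 1, h 2]

theorem apply_const_one (k : Fin 4) : coordsAndMidpoint k 1 = 1 := by
  fin_cases k <;> simp

theorem fderiv_fderiv_logSumExp_apply (μ : Fin 3 → ℝ) :
    fderiv ℝ (fun ν => fderiv ℝ (logSumExp coordsAndMidpoint) ν (Pi.single 0 1)) μ
        (Pi.single 1 1) =
      exp ((μ 0 + μ 1) / 2) * (-exp (μ 0) - exp (μ 1) + exp (μ 2) - 4 * exp ((μ 0 + μ 1) / 2)) /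
        (4 * (exp (μ 0) + exp (μ 1) + exp (μ 2) + exp ((μ 0 + μ 1) / 2)) ^ 2) := by
  have hmid : exp ((μ 0 + μ 1) / 2) ^ 2 = exp (μ 0) * exp (μ 1) := by
    rw [← exp_nat_mul, ← exp_add]; ring_nf
  rw [logSumExp.fderiv_fderiv_apply]
  simp only [Fin.sum_univ_four, apply_zero, apply_one, apply_two, apply_three, Pi.single_eq_same,
    Pi.single_eq_of_ne, ne_eq, zero_ne_one, one_ne_zero, Fin.reduceEq, not_false_eq_true, mul_zero,
    mul_one, add_zero, zero_add]
  field_simp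
  linear_combination 16 * hmid

theorem grad_logSumExp_one (μ : Fin 3 → ℝ) :
    grad (logSumExp coordsAndMidpoint) μ 1 =
      (exp (μ 1) + exp ((μ 0 + μ 1) / 2) / 2) /
        (exp (μ 0) + exp (μ 1) + exp (μ 2) + exp ((μ 0 + μ 1) / 2)) := by
  simp [grad, logSumExp.fderiv_apply, Fin.sum_univ_four, div_eq_mul_inv]

theorem fderiv_fderiv_logSumExp_nonneg_iff (μ : Fin 3 → ℝ) :
    0 ≤ fderiv ℝ (fun ν => fderiv ℝ (logSumExp coordsAndMidpoint) ν (Pi.single 0 1)) μ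
        (Pi.single 1 1) ↔
      4 * exp ((μ 0 + μ 1) / 2) + exp (μ 0) + exp (μ 1) ≤ exp (μ 2) := by
  rw [fderiv_fderiv_logSumExp_apply, le_div_iff₀ (by positivity), zero_mul,
    mul_nonneg_iff_of_pos_left (exp_pos _)]
  constructor <;> intro h <;> linarith

/- All coordinates below are multiples of `log 2`, so every exponential is a power of `2`;
submodularity fails at the witness because `28 * 19 > 23 ^ 2`. -/
theorem not_submodular : ¬ ∀ x y : Fin 3 → ℝ,
    logSumExp coordsAndMidpoint (x ⊔ y) + logSumExp coordsAndMidpoint (x ⊓ y) ≤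
      logSumExp coordsAndMidpoint x + logSumExp coordsAndMidpoint y := by
  intro h
  have hl : 0 ≤ log 2 := log_nonneg one_le_two
  have hsup : (![2 * log 2, 0, 4 * log 2] ⊔ ![0, 2 * log 2, 4 * log 2] : Fin 3 → ℝ) =
      ![2 * log 2, 2 * log 2, 4 * log 2] := by
    ext i; fin_cases i <;> simp [hl]
  have hinf : (![2 * log 2, 0, 4 * log 2] ⊓ ![0, 2 * log 2, 4 * log 2] : Fin 3 → ℝ) =
      ![0, 0, 4 * log 2] := by
    ext i; fin_cases i <;> simp [hl]
  have h' := h ![2 * log 2, 0, 4 * log 2] ![0, 2 * log 2, 4 * log 2]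
  rw [hsup, hinf] at h'
  norm_num [logSumExp_apply, exp_two_mul_log_two, exp_four_mul_log_two, exp_log,
    Matrix.cons_val_two] at h'
  rw [← log_mul (by norm_num) (by norm_num), ← log_mul (by norm_num) (by norm_num),
    log_le_log_iff (by norm_num) (by norm_num)] at h'
  norm_num at h'

theorem not_substitutable : ¬ ∀ i j : Fin 3, i ≠ j → ∀ (μ : Fin 3 → ℝ) (t : ℝ), 0 < t →
    grad (logSumExp coordsAndMidpoint) (μ + t • (Pi.single i 1 : Fin 3 → ℝ)) j ≤
      grad (logSumExp coordsAndMidpoint) μ j := by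
  intro h
  have hshift : (![0, 0, 4 * log 2] + (2 * log 2) • Pi.single 0 1 : Fin 3 → ℝ) =
      ![2 * log 2, 0, 4 * log 2] := by
    ext i; fin_cases i <;> simp
  have h' := h 0 1 (by decide) ![0, 0, 4 * log 2] (2 * log 2) (by positivity)
  rw [hshift] at h'
  norm_num [grad_logSumExp_one, exp_two_mul_log_two, exp_four_mul_log_two, exp_log,
    Matrix.cons_val_two] at h'

end coordsAndMidpoint

theorem stmt_19 (w : (Fin 3 → ℝ) → ℝ)
    (hw : w = fun μ => Real.log (Real.exp (μ 0) + Real.exp (μ 1) + Real.exp (μ 2) +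
      Real.exp ((μ 0 + μ 1) / 2))) :
    IsCWF w ∧ Differentiable ℝ w ∧
    (∀ μ : Fin 3 → ℝ,
      fderiv ℝ (fun ν => fderiv ℝ w ν (Pi.single (0 : Fin 3) 1)) μ
          (Pi.single (1 : Fin 3) 1) =
        Real.exp ((μ 0 + μ 1) / 2) *
            (-Real.exp (μ 0) - Real.exp (μ 1) + Real.exp (μ 2) -
              4 * Real.exp ((μ 0 + μ 1) / 2)) /
          (4 * (Real.exp (μ 0) + Real.exp (μ 1) + Real.exp (μ 2) +
            Real.exp ((μ 0 + μ 1) / 2)) ^ 2)) ∧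
    (∀ μ : Fin 3 → ℝ,
      (0 ≤ fderiv ℝ (fun ν => fderiv ℝ w ν (Pi.single (0 : Fin 3) 1)) μ
          (Pi.single (1 : Fin 3) 1)) ↔
        4 * Real.exp ((μ 0 + μ 1) / 2) + Real.exp (μ 0) + Real.exp (μ 1) ≤
          Real.exp (μ 2)) ∧
    ¬ (∀ x y : Fin 3 → ℝ, w (x ⊔ y) + w (x ⊓ y) ≤ w x + w y) ∧
    ¬ (∀ i j : Fin 3, i ≠ j → ∀ (μ : Fin 3 → ℝ) (t : ℝ), 0 < t →
        grad w (μ + t • (Pi.single i 1 : Fin 3 → ℝ)) j ≤ grad w μ j) := by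
  obtain rfl : w = logSumExp coordsAndMidpoint :=
    hw.trans (funext fun μ => (coordsAndMidpoint.logSumExp_apply μ).symm)
  have hconst (t : ℝ) : (fun _ => t : Fin 3 → ℝ) = t • 1 := by ext; simp
  refine ⟨⟨fun _ _ h => logSumExp.monotone _ coordsAndMidpoint.monotone h, fun μ t => ?_,
      logSumExp.convexOn _⟩,
    logSumExp.differentiable _, coordsAndMidpoint.fderiv_fderiv_logSumExp_apply,
    coordsAndMidpoint.fderiv_fderiv_logSumExp_nonneg_iff, coordsAndMidpoint.not_submodular,
    coordsAndMidpoint.not_substitutable⟩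
  rw [hconst, logSumExp.apply_add_smul _ coordsAndMidpoint.apply_const_one]
end
end
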